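/- arXiv:2408.05138 — 2 statements merged into one kernel-verified Lean document; each statement's English description precedes it below -/
import Mathlib

section
/- If 0 < θ ≤ 3 then θ − ln θ − 1 ≥ (θ−1)²/12. -/
/-! Write θ = s². Since log θ = 2 log s ≤ 2 (s - 1), we get θ - log θ - 1 ≥ (s - 1)², while
(θ - 1)² = (s - 1)² (s + 1)² and (s + 1)² ≤ 12 because s ≤ √3 < 2. -/

open Real

lemma sq_sqrt_sub_one_le_sub_log_sub_one {x : ℝ} (hx : 0 < x) :
    (√x - 1) ^ 2 ≤ x - log x - 1 := by
  have hlog : log x = 2 * log √x := by rw [log_sqrt hx.le]; ring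
  have hle : log √x ≤ √x - 1 := log_le_sub_one_of_pos (sqrt_pos.mpr hx)
  have hsq : √x ^ 2 = x := sq_sqrt hx.le
  nlinarith

theorem stmt_4 (θ : ℝ) (hθ0 : 0 < θ) (hθ3 : θ ≤ 3) :
    (θ - 1) ^ 2 / 12 ≤ θ - Real.log θ - 1 := by
  have hsq : √θ ^ 2 = θ := sq_sqrt hθ0.le
  have hfactor : (θ - 1) ^ 2 = (√θ - 1) ^ 2 * (√θ + 1) ^ 2 := by
    linear_combination (2 - θ - √θ ^ 2) * hsq
  have hsqrt_le : √θ ≤ 2 := by nlinarith [sqrt_nonneg θ]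
  have hbound : (√θ + 1) ^ 2 ≤ 12 := by nlinarith [sqrt_nonneg θ]
  calc (θ - 1) ^ 2 / 12 = (√θ - 1) ^ 2 * ((√θ + 1) ^ 2 / 12) := by rw [hfactor]; ring
    _ ≤ (√θ - 1) ^ 2 * 1 := by gcongr; linarith
    _ ≤ θ - log θ - 1 := by rw [mul_one]; exact sq_sqrt_sub_one_le_sub_log_sub_one hθ0
end

section
/- Let g : ℝ³ → ℝ with g ∈ L^q and ∇g ∈ L^r where q ∈ (1,∞) and r ∈ (3,∞). Then g ∈ L^∞ and there is a constant C = C(q,r) with ‖g‖_{L^∞} ≤ C·‖g‖_{L^q}^{q(r−3)/(3r+q(r−3))}·‖∇g‖_{L^r}^{3r/(3r+q(r−3))}. -/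
/-!
On a space of dimension `d`, averaging the fundamental theorem of calculus along the segments
from `0` to the points `y` of the unit ball, and bounding both resulting terms by Hölder's
inequality, gives the unit-scale Morrey estimate `|g 0| ≲ ‖g‖_q + ‖∇g‖_r`; the gradient term
comes with the factor `∫₀¹ s^(-d/r) ds`, finite because `r > d`. Applied to `z ↦ g (x + c • z)`
this becomes `|g x| ≲ c^(-d/q) ‖g‖_q + c^(1-d/r) ‖∇g‖_r` for every `c > 0`, and choosing `c`
so that the two terms agree yields `‖g‖_∞ ≲ ‖g‖_q^θ₁ ‖∇g‖_r^θ₂` with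
`θ₁ = (1 - d/r)/(d/q + 1 - d/r)` and `θ₂ = (d/q)/(d/q + 1 - d/r)`; for `d = 3` these are the
exponents of the statement.
-/

open MeasureTheory ENNReal Metric Module Filter Topology

theorem le_two_mul_rpow_mul_rpow_of_forall_le {X K A B α β : ℝ} (hK : 0 ≤ K) (hA : 0 ≤ A)
    (hB : 0 ≤ B) (hα : 0 < α) (hβ : 0 < β)
    (h : ∀ c : ℝ, 0 < c → X ≤ K * (c ^ (-α) * A + c ^ β * B)) :
    X ≤ 2 * K * A ^ (β / (α + β)) * B ^ (α / (α + β)) := by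
  have hRHS : 0 ≤ 2 * K * A ^ (β / (α + β)) * B ^ (α / (α + β)) := by positivity
  rcases hA.eq_or_lt with rfl | hA
  · have hlim : Tendsto (fun c : ℝ => K * (c ^ (-α) * 0 + c ^ β * B)) (𝓝[>] 0) (𝓝 0) := by
      have : Tendsto (fun c : ℝ => c ^ β) (𝓝[>] 0) (𝓝 (0 ^ β)) :=
        (Real.continuousAt_rpow_const 0 β (Or.inr hβ.le)).tendsto.mono_left nhdsWithin_le_nhds
      simpa [Real.zero_rpow hβ.ne'] using (this.mul_const B).const_mul K
    exact (ge_of_tendsto hlim (eventually_nhdsWithin_of_forall h)).trans hRHS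
  rcases hB.eq_or_lt with rfl | hB
  · have hlim : Tendsto (fun c : ℝ => K * (c ^ (-α) * A + c ^ β * 0)) atTop (𝓝 0) := by
      simpa using ((tendsto_rpow_neg_atTop hα).mul_const A).const_mul K
    exact (ge_of_tendsto hlim ((eventually_gt_atTop 0).mono h)).trans hRHS
  set c := A ^ (1 / (α + β)) * B ^ (-(1 / (α + β)))
  have hc : 0 < c := by positivity
  have hαβ : 0 < α + β := by linarith
  have e1 : c ^ (-α) * A = A ^ (β / (α + β)) * B ^ (α / (α + β)) := by
    rw [Real.mul_rpow (by positivity) (by positivity), ← Real.rpow_mul hA.le,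
      ← Real.rpow_mul hB.le, mul_right_comm, ← Real.rpow_add_one hA.ne']
    congr 2
    · field_simp; ring
    · field_simp
  have e2 : c ^ β * B = A ^ (β / (α + β)) * B ^ (α / (α + β)) := by
    rw [Real.mul_rpow (by positivity) (by positivity), ← Real.rpow_mul hA.le,
      ← Real.rpow_mul hB.le, mul_assoc, ← Real.rpow_add_one hB.ne']
    congr 2
    · field_simp
    · field_simp; ring
  calc X ≤ K * (c ^ (-α) * A + c ^ β * B) := h c hc
    _ = _ := by rw [e1, e2]; ring

theorem setLIntegral_enorm_le_eLpNorm_mul_measure_rpow {α F : Type*} [MeasurableSpace α]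
    [NormedAddCommGroup F] (μ : Measure α) {f : α → F} (hf : AEStronglyMeasurable f μ)
    {p : ℝ≥0∞} (hp : 1 ≤ p) (S : Set α) :
    ∫⁻ x in S, ‖f x‖ₑ ∂μ ≤ eLpNorm f p μ * μ S ^ (1 - 1 / p.toReal) := by
  rw [← eLpNorm_one_eq_lintegral_enorm]
  calc eLpNorm f 1 (μ.restrict S)
      ≤ eLpNorm f p (μ.restrict S)
          * μ.restrict S Set.univ ^ (1 / (1 : ℝ≥0∞).toReal - 1 / p.toReal) :=
        eLpNorm_le_eLpNorm_mul_rpow_measure_univ hp hf.restrict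
    _ ≤ eLpNorm f p μ * μ S ^ (1 - 1 / p.toReal) := by
        rw [Measure.restrict_apply_univ, toReal_one, div_one]
        gcongr
        exact Measure.restrict_le_self

theorem lintegral_Ioc_ofReal_rpow_ne_top {t : ℝ} (ht : -1 < t) :
    ∫⁻ s in Set.Ioc (0 : ℝ) 1, ENNReal.ofReal s ^ t ≠ ⊤ := by
  have hint : IntegrableOn (fun s : ℝ => s ^ t) (Set.Ioc 0 1) :=
    (intervalIntegrable_iff_integrableOn_Ioc_of_le zero_le_one).1
      (intervalIntegral.intervalIntegrable_rpow' ht)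
  rw [setLIntegral_congr_fun measurableSet_Ioc fun s hs => ENNReal.ofReal_rpow_of_pos hs.1]
  exact hint.lintegral_lt_top.ne

section

variable {E F : Type*} [NormedAddCommGroup E] [NormedSpace ℝ E] [NormedAddCommGroup F]

theorem enorm_sub_le_lintegral_enorm_fderiv [NormedSpace ℝ F] {g : E → F} (hg : ContDiff ℝ 1 g)
    (x y : E) :
    ‖g y - g x‖ₑ ≤ ∫⁻ t in Set.Ioc (0 : ℝ) 1, ‖fderiv ℝ g (x + t • (y - x))‖ₑ * ‖y - x‖ₑ := by
  have hγ : ContDiff ℝ 1 fun t : ℝ => x + t • (y - x) := by fun_prop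
  have h := enorm_sub_le_lintegral_deriv_of_contDiffOn_Icc (hg.comp hγ).contDiffOn zero_le_one
  simp only [Function.comp_def, one_smul, zero_smul, add_zero, add_sub_cancel] at h
  rw [restrict_Ioc_eq_restrict_Icc]
  refine h.trans (lintegral_mono fun t => ?_)
  have hline : HasDerivAt (fun t : ℝ => x + t • (y - x)) (y - x) t := by
    simpa only [one_smul] using ((hasDerivAt_id' t).smul_const (y - x)).const_add x
  have hcomp : HasDerivAt (fun t : ℝ => g (x + t • (y - x)))
      (fderiv ℝ g (x + t • (y - x)) (y - x)) t :=
    (hg.differentiable one_ne_zero _).hasFDerivAt.comp_hasDerivAt t hline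
  rw [hcomp.deriv]
  exact (fderiv ℝ g _).le_opENorm _

theorem enorm_le_enorm_add_lintegral_enorm_fderiv_smul [NormedSpace ℝ F] {g : E → F}
    (hg : ContDiff ℝ 1 g) {y : E} (hy : ‖y‖ ≤ 1) :
    ‖g 0‖ₑ ≤ ‖g y‖ₑ + ∫⁻ s in Set.Ioc (0 : ℝ) 1, ‖fderiv ℝ g (s • y)‖ₑ := by
  have hy1 : ‖y‖ₑ ≤ 1 := by
    rw [← ofReal_norm]; exact ENNReal.ofReal_le_one.2 hy
  have hseg := enorm_sub_le_lintegral_enorm_fderiv hg 0 y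
  simp only [sub_zero, zero_add] at hseg
  calc ‖g 0‖ₑ = ‖g y - (g y - g 0)‖ₑ := by rw [sub_sub_cancel (g y) (g 0)]
    _ ≤ ‖g y‖ₑ + ‖g y - g 0‖ₑ := enorm_sub_le
    _ ≤ ‖g y‖ₑ + ∫⁻ s in Set.Ioc (0 : ℝ) 1, ‖fderiv ℝ g (s • y)‖ₑ := by
      gcongr
      exact hseg.trans (lintegral_mono fun s => mul_le_of_le_one_right' hy1)

variable [MeasurableSpace E] [BorelSpace E] [FiniteDimensional ℝ E] (μ : Measure E)
  [μ.IsAddHaarMeasure]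

theorem eLpNorm_comp_smul_of_pos {f : E → F} (hf : AEStronglyMeasurable f μ) {p : ℝ≥0∞}
    (hp : p ≠ ⊤) {c : ℝ} (hc : 0 < c) :
    eLpNorm (fun x => f (c • x)) p μ
      = ENNReal.ofReal c ^ (-(finrank ℝ E / p.toReal)) * eLpNorm f p μ := by
  have hmap := Measure.map_addHaar_smul μ hc.ne'
  have hsmul : AEMeasurable (fun x : E => c • x) μ := (measurable_const_smul c).aemeasurable
  rw [← Function.comp_def, ← eLpNorm_map_measure (by rw [hmap]; exact hf.smul_measure _) hsmul,
    hmap, eLpNorm_smul_measure_of_ne_top hp, smul_eq_mul]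
  congr 1
  rw [abs_of_pos (by positivity), ENNReal.ofReal_inv_of_pos (by positivity), ofReal_pow hc.le,
    ← ENNReal.rpow_natCast, ← ENNReal.rpow_neg, ← ENNReal.rpow_mul, one_div, toReal_inv]
  ring_nf

theorem eLpNorm_comp_add_smul_of_pos {f : E → F} (hf : AEStronglyMeasurable f μ) {p : ℝ≥0∞}
    (hp : p ≠ ⊤) (x : E) {c : ℝ} (hc : 0 < c) :
    eLpNorm (fun z => f (x + c • z)) p μ
      = ENNReal.ofReal c ^ (-(finrank ℝ E / p.toReal)) * eLpNorm f p μ := by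
  have htrans : AEStronglyMeasurable (fun w => f (x + w)) μ :=
    hf.comp_measurePreserving (measurePreserving_add_left μ x)
  rw [eLpNorm_comp_smul_of_pos μ htrans hp hc]
  congr 1
  exact eLpNorm_comp_measurePreserving hf (measurePreserving_add_left μ x)

theorem measure_closedBall_mul_enorm_le [NormedSpace ℝ F] {q r : ℝ} (hq : 1 ≤ q) (hr : 1 ≤ r)
    {g : E → F} (hg : ContDiff ℝ 1 g) :
    μ (closedBall 0 1) * ‖g 0‖ₑ
      ≤ eLpNorm g (.ofReal q) μ * μ (closedBall 0 1) ^ (1 - 1 / q)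
        + (∫⁻ s in Set.Ioc (0 : ℝ) 1, .ofReal s ^ (-(finrank ℝ E / r)))
          * (eLpNorm (fderiv ℝ g) (.ofReal r) μ * μ (closedBall 0 1) ^ (1 - 1 / r)) := by
  set B : Set E := closedBall 0 1
  have hgc := hg.continuous
  have hdgc := hg.continuous_fderiv one_ne_zero
  have hdg_meas : Measurable (Function.uncurry fun (y : E) (s : ℝ) => ‖fderiv ℝ g (s • y)‖ₑ) :=
    (hdgc.comp (by fun_prop)).enorm.measurable
  have haverage : μ B * ‖g 0‖ₑ ≤ ∫⁻ y in B, ‖g y‖ₑ ∂μ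
      + ∫⁻ s in Set.Ioc (0 : ℝ) 1, ∫⁻ y in B, ‖fderiv ℝ g (s • y)‖ₑ ∂μ := by
    calc μ B * ‖g 0‖ₑ = ∫⁻ _ in B, ‖g 0‖ₑ ∂μ := by rw [setLIntegral_const, mul_comm]
      _ ≤ ∫⁻ y in B, (‖g y‖ₑ + ∫⁻ s in Set.Ioc (0 : ℝ) 1, ‖fderiv ℝ g (s • y)‖ₑ) ∂μ :=
        setLIntegral_mono (hgc.enorm.measurable.add hdg_meas.lintegral_prod_right') fun y hy =>
          enorm_le_enorm_add_lintegral_enorm_fderiv_smul hg (mem_closedBall_zero_iff.1 hy)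
      _ = _ := by
        rw [lintegral_add_left hgc.enorm.measurable, lintegral_lintegral_swap hdg_meas.aemeasurable]
  have hholder_g : ∫⁻ y in B, ‖g y‖ₑ ∂μ ≤ eLpNorm g (.ofReal q) μ * μ B ^ (1 - 1 / q) := by
    simpa only [toReal_ofReal (zero_le_one.trans hq)] using
      setLIntegral_enorm_le_eLpNorm_mul_measure_rpow μ hgc.aestronglyMeasurable
        (one_le_ofReal.2 hq) B
  have hholder_dg : ∀ s ∈ Set.Ioc (0 : ℝ) 1, ∫⁻ y in B, ‖fderiv ℝ g (s • y)‖ₑ ∂μ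
      ≤ .ofReal s ^ (-(finrank ℝ E / r))
        * (eLpNorm (fderiv ℝ g) (.ofReal r) μ * μ B ^ (1 - 1 / r)) := by
    intro s hs
    have h := setLIntegral_enorm_le_eLpNorm_mul_measure_rpow μ (f := fun y => fderiv ℝ g (s • y))
      (hdgc.comp (continuous_const_smul s)).aestronglyMeasurable (one_le_ofReal.2 hr) B
    rwa [eLpNorm_comp_smul_of_pos μ hdgc.aestronglyMeasurable ofReal_ne_top hs.1,
      toReal_ofReal (zero_le_one.trans hr), mul_assoc] at h
  calc μ B * ‖g 0‖ₑ ≤ _ := haverage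
    _ ≤ _ := add_le_add hholder_g (setLIntegral_mono' measurableSet_Ioc hholder_dg)
    _ = _ := by rw [lintegral_mul_const _ (by fun_prop)]

theorem exists_enorm_le_rpow_mul_eLpNorm_add_rpow_mul_eLpNorm_fderiv [NormedSpace ℝ F]
    {q r : ℝ} (hq : 1 ≤ q) (hr : 1 ≤ r) (hdr : finrank ℝ E < r) :
    ∃ M : ℝ≥0∞, M ≠ ⊤ ∧ ∀ g : E → F, ContDiff ℝ 1 g → ∀ (x : E) (c : ℝ), 0 < c →
      ‖g x‖ₑ ≤ M * (.ofReal c ^ (-(finrank ℝ E / q)) * eLpNorm g (.ofReal q) μ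
        + .ofReal c ^ (1 - finrank ℝ E / r) * eLpNorm (fderiv ℝ g) (.ofReal r) μ) := by
  set κ := μ (closedBall 0 1)
  set I := ∫⁻ s in Set.Ioc (0 : ℝ) 1, ENNReal.ofReal s ^ (-(finrank ℝ E / r))
  set m := max (κ ^ (1 - 1 / q)) (I * κ ^ (1 - 1 / r))
  have hκ0 : κ ≠ 0 := (measure_closedBall_pos μ 0 one_pos).ne'
  have hκtop : κ ≠ ⊤ := measure_closedBall_lt_top.ne
  have hItop : I ≠ ⊤ := by
    refine lintegral_Ioc_ofReal_rpow_ne_top ?_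
    rw [neg_lt_neg_iff, div_lt_one (by linarith)]
    exact hdr
  have hmtop : m ≠ ⊤ :=
    max_ne_top (rpow_ne_top_of_nonneg (sub_nonneg.2 (div_le_one_of_le₀ hq (by linarith))) hκtop)
      (mul_ne_top hItop
        (rpow_ne_top_of_nonneg (sub_nonneg.2 (div_le_one_of_le₀ hr (by linarith))) hκtop))
  refine ⟨κ⁻¹ * m, mul_ne_top (inv_ne_top.2 hκ0) hmtop, fun g hg x c hc => ?_⟩
  set G := fun z => g (x + c • z)
  have hG : ContDiff ℝ 1 G := hg.comp (by fun_prop)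
  have hGq : eLpNorm G (.ofReal q) μ
      = .ofReal c ^ (-(finrank ℝ E / q)) * eLpNorm g (.ofReal q) μ := by
    rw [eLpNorm_comp_add_smul_of_pos μ hg.continuous.aestronglyMeasurable ofReal_ne_top x hc,
      toReal_ofReal (by linarith)]
  have hGr : eLpNorm (fderiv ℝ G) (.ofReal r) μ
      = .ofReal c ^ (1 - finrank ℝ E / r) * eLpNorm (fderiv ℝ g) (.ofReal r) μ := by
    have hdG : fderiv ℝ G = fun z => c • fderiv ℝ g (x + c • z) := funext fun z => by
      rw [fderiv_comp_smul (f := fun w => g (x + w)), fderiv_comp_add_left]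
    rw [hdG]
    refine (eLpNorm_const_smul c (fun z => fderiv ℝ g (x + c • z)) _ μ).trans ?_
    rw [Real.enorm_eq_ofReal hc.le,
      eLpNorm_comp_add_smul_of_pos μ (hg.continuous_fderiv one_ne_zero).aestronglyMeasurable
        ofReal_ne_top x hc, toReal_ofReal (by linarith), ← mul_assoc, sub_eq_add_neg,
      ENNReal.rpow_add _ _ (ofReal_pos.2 hc).ne' ofReal_ne_top, ENNReal.rpow_one]
  calc ‖g x‖ₑ = κ⁻¹ * (κ * ‖G 0‖ₑ) := by
        rw [← mul_assoc, ENNReal.inv_mul_cancel hκ0 hκtop, one_mul]; simp [G]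
    _ ≤ κ⁻¹ * (eLpNorm G (.ofReal q) μ * κ ^ (1 - 1 / q)
        + I * (eLpNorm (fderiv ℝ G) (.ofReal r) μ * κ ^ (1 - 1 / r))) := by
        gcongr; exact measure_closedBall_mul_enorm_le μ hq hr hG
    _ ≤ κ⁻¹ * (eLpNorm G (.ofReal q) μ * m + eLpNorm (fderiv ℝ G) (.ofReal r) μ * m) := by
        refine mul_le_mul_right (add_le_add (mul_le_mul_right (le_max_left _ _) _) ?_) _
        exact (mul_left_comm _ _ _).trans_le (mul_le_mul_right (le_max_right _ _) _)
    _ = _ := by rw [hGq, hGr]; ring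

theorem exists_enorm_le_mul_eLpNorm_rpow_mul_eLpNorm_fderiv_rpow [Nontrivial E] [NormedSpace ℝ F]
    {q r : ℝ} (hq : 1 ≤ q) (hr : (finrank ℝ E : ℝ) < r) :
    ∃ C : ℝ, 0 < C ∧ ∀ g : E → F, ContDiff ℝ 1 g →
      MemLp g (.ofReal q) μ → MemLp (fderiv ℝ g) (.ofReal r) μ → ∀ x,
        ‖g x‖ₑ ≤ .ofReal C
          * eLpNorm g (.ofReal q) μ
            ^ (q * (r - finrank ℝ E) / (finrank ℝ E * r + q * (r - finrank ℝ E)))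
          * eLpNorm (fderiv ℝ g) (.ofReal r) μ
            ^ (finrank ℝ E * r / (finrank ℝ E * r + q * (r - finrank ℝ E))) := by
  set d : ℝ := (finrank ℝ E : ℝ)
  have hd : 1 ≤ d := Nat.one_le_cast.2 finrank_pos
  have hα : 0 < d / q := by positivity
  have hβ : 0 < 1 - d / r := sub_pos.2 ((div_lt_one (by linarith)).2 hr)
  have hr0 : r ≠ 0 := by linarith
  have hθ₁ : (1 - d / r) / (d / q + (1 - d / r)) = q * (r - d) / (d * r + q * (r - d)) := by
    field_simp
  have hθ₂ : d / q / (d / q + (1 - d / r)) = d * r / (d * r + q * (r - d)) := by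
    field_simp
  obtain ⟨M, hM_top, hM⟩ :=
    exists_enorm_le_rpow_mul_eLpNorm_add_rpow_mul_eLpNorm_fderiv (F := F) μ hq (by linarith) hr
  obtain ⟨K, hK, hMK⟩ : ∃ K : ℝ, 0 < K ∧ M ≤ .ofReal K := ⟨M.toReal + 1, by positivity,
    (ofReal_toReal hM_top).symm.trans_le (ofReal_le_ofReal (by linarith))⟩
  refine ⟨2 * K, by positivity, fun g hg hgq hgr x => ?_⟩
  set Nq := eLpNorm g (.ofReal q) μ
  set Nr := eLpNorm (fderiv ℝ g) (.ofReal r) μ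
  have hreal : ‖g x‖ ≤ 2 * K * Nq.toReal ^ ((1 - d / r) / (d / q + (1 - d / r)))
      * Nr.toReal ^ (d / q / (d / q + (1 - d / r))) := by
    refine le_two_mul_rpow_mul_rpow_of_forall_le hK.le toReal_nonneg toReal_nonneg hα hβ
      fun c hc => ?_
    rw [← ofReal_le_ofReal_iff (by positivity), ofReal_norm]
    calc ‖g x‖ₑ ≤ M * (.ofReal c ^ (-(d / q)) * Nq + .ofReal c ^ (1 - d / r) * Nr) :=
          hM g hg x c hc
      _ ≤ .ofReal K * (.ofReal c ^ (-(d / q)) * Nq + .ofReal c ^ (1 - d / r) * Nr) := by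
          gcongr
      _ = _ := by
          rw [ofReal_mul hK.le, ofReal_add (by positivity) (by positivity),
            ofReal_mul (by positivity), ofReal_mul (by positivity), ← ofReal_rpow_of_pos hc,
            ← ofReal_rpow_of_pos hc, ofReal_toReal hgq.2.ne, ofReal_toReal hgr.2.ne]
  rw [← ofReal_norm, ← hθ₁, ← hθ₂]
  refine (ofReal_le_ofReal hreal).trans_eq ?_
  rw [ofReal_mul (by positivity), ofReal_mul (by positivity),
    ← ofReal_rpow_of_nonneg toReal_nonneg (by positivity),
    ← ofReal_rpow_of_nonneg toReal_nonneg (by positivity),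
    ofReal_toReal hgq.2.ne, ofReal_toReal hgr.2.ne]

theorem exists_const_eLpNorm_top_le_of_contDiff [Nontrivial E] [NormedSpace ℝ F] {q r : ℝ}
    (hq : 1 ≤ q) (hr : (finrank ℝ E : ℝ) < r) :
    ∃ C : ℝ, 0 < C ∧ ∀ g : E → F, ContDiff ℝ 1 g →
      MemLp g (.ofReal q) μ → MemLp (fderiv ℝ g) (.ofReal r) μ →
      MemLp g ⊤ μ ∧
        eLpNorm g ⊤ μ ≤ .ofReal C
          * eLpNorm g (.ofReal q) μ
            ^ (q * (r - finrank ℝ E) / (finrank ℝ E * r + q * (r - finrank ℝ E)))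
          * eLpNorm (fderiv ℝ g) (.ofReal r) μ
            ^ (finrank ℝ E * r / (finrank ℝ E * r + q * (r - finrank ℝ E))) := by
  obtain ⟨C, hC, hpoint⟩ :=
    exists_enorm_le_mul_eLpNorm_rpow_mul_eLpNorm_fderiv_rpow (F := F) μ hq hr
  refine ⟨C, hC, fun g hg hgq hgr => ?_⟩
  have hbound := eLpNormEssSup_le_of_ae_enorm_bound (ae_of_all μ (hpoint g hg hgq hgr))
  rw [← eLpNorm_exponent_top] at hbound
  have hd : 0 ≤ (finrank ℝ E : ℝ) := Nat.cast_nonneg _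
  have hden : 0 ≤ finrank ℝ E * r + q * (r - finrank ℝ E) := by nlinarith
  refine ⟨⟨hg.continuous.aestronglyMeasurable, hbound.trans_lt ?_⟩, hbound⟩
  exact mul_lt_top (mul_lt_top ofReal_lt_top
    (rpow_lt_top_of_nonneg (div_nonneg (by nlinarith) hden) hgq.2.ne))
    (rpow_lt_top_of_nonneg (div_nonneg (by nlinarith) hden) hgr.2.ne)

end

theorem stmt_18 (q r : ℝ) (hq : 1 < q) (hr : 3 < r) :
    ∃ C : ℝ, 0 < C ∧
      ∀ g : EuclideanSpace ℝ (Fin 3) → ℝ,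
        ContDiff ℝ 1 g →
        MemLp g (ENNReal.ofReal q) volume →
        MemLp (fun x => ‖fderiv ℝ g x‖) (ENNReal.ofReal r) volume →
        MemLp g ⊤ volume ∧
          eLpNorm g ⊤ volume ≤
            ENNReal.ofReal C *
              eLpNorm g (ENNReal.ofReal q) volume ^ (q * (r - 3) / (3 * r + q * (r - 3))) *
              eLpNorm (fun x => ‖fderiv ℝ g x‖) (ENNReal.ofReal r) volume ^
                (3 * r / (3 * r + q * (r - 3))) := by
  have hdim : (finrank ℝ (EuclideanSpace ℝ (Fin 3)) : ℝ) = 3 := by simp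
  obtain ⟨C, hC, hbound⟩ := exists_const_eLpNorm_top_le_of_contDiff (F := ℝ) volume hq.le
    (hdim ▸ hr)
  refine ⟨C, hC, fun g hg hgq hgr => ?_⟩
  have hdg := (hg.continuous_fderiv one_ne_zero).aestronglyMeasurable (μ := volume)
  simpa only [hdim, eLpNorm_norm] using hbound g hg hgq ((memLp_norm_iff hdg).1 hgr)
end
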